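/- arXiv:2006.05958 — 4 statements merged into one kernel-verified Lean document; each statement's English description precedes it below -/
import Mathlib

section
/- Let J : ℝ^m → Mₙ(ℝ) be a C⁴ map with J(x)² = -I for every x, and suppose that Δ²J(x) commutes with J(x) for every x (i.e. Δ²J·J = J·Δ²J pointwise). Then for every x, Δ²J(x) = J(x)·ΔJ(x)·ΔJ(x) + J(x)·∑_{p=1}^{m} ∂_pJ(x)·∂_p(ΔJ)(x) + J(x)·∑_{p=1}^{m} ∂_p(ΔJ)(x)·∂_pJ(x) + J(x)·Δ(∑_{p=1}^{m} ∂_pJ·∂_pJ)(x). -/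
open scoped Matrix.Norms.L2Operator

/-- The derivative of a matrix-valued map `J : ℝ^m → Mₙ(ℝ)` at `x` in the direction of
the `p`-th standard basis vector of `ℝ^m`. -/
noncomputable def dirDeriv {m n : ℕ} (J : (Fin m → ℝ) → Matrix (Fin n) (Fin n) ℝ)
    (p : Fin m) : (Fin m → ℝ) → Matrix (Fin n) (Fin n) ℝ :=
  fun x => fderiv ℝ J x (Pi.single p 1)

/-- The componentwise Laplacian `ΔJ(x) = ∑_p ∂_p ∂_p J (x)`. -/
noncomputable def matLap {m n : ℕ} (J : (Fin m → ℝ) → Matrix (Fin n) (Fin n) ℝ) :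
    (Fin m → ℝ) → Matrix (Fin n) (Fin n) ℝ :=
  fun x => ∑ p : Fin m, dirDeriv (dirDeriv J p) p x

/-!
Differentiating `J² = -1` twice gives, by the Leibniz rule for the Laplacian,
`J Δ²J + Δ²J J + 2 (ΔJ ΔJ + ∑ ∂J ∂ΔJ + ∑ ∂ΔJ ∂J + Δ ∑ ∂J ∂J) = 0`.
When `Δ²J` commutes with `J` the first two terms coincide, so `J Δ²J = -Q'` for the bracket `Q'`,
and multiplying by `J` on the left (using `J² = -1` once more) yields `Δ²J = J Q'`.
-/

theorem eq_mul_of_mul_add_mul_add_two_smul_eq_zero {R : Type*} [Ring R] [Module ℝ R]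
    {j b q : R} (hj : j * j = -1) (hcomm : b * j = j * b)
    (h : j * b + b * j + (2 : ℝ) • q = 0) : b = j * q := by
  have hjb : j * b + q = 0 := by
    have h2 : (2 : ℝ) • (j * b + q) = 0 := by rw [← h, hcomm, smul_add, two_smul]
    exact (smul_eq_zero.mp h2).resolve_left two_ne_zero
  calc b = -(j * j * b) := by rw [hj, neg_one_mul, neg_neg]
    _ = j * q := by rw [mul_assoc, eq_neg_of_add_eq_zero_right hjb, mul_neg]

section Laplacian

variable {m n : ℕ} {A B : (Fin m → ℝ) → Matrix (Fin n) (Fin n) ℝ}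

theorem ContDiff.dirDeriv {k l : WithTop ℕ∞} (hA : ContDiff ℝ k A) (hlk : l + 1 ≤ k)
    (p : Fin m) : ContDiff ℝ l (dirDeriv A p) :=
  (hA.fderiv_right hlk).clm_apply contDiff_const

theorem ContDiff.matLap {k l : WithTop ℕ∞} (hA : ContDiff ℝ k A) (hlk : l + 2 ≤ k) :
    ContDiff ℝ l (matLap A) := by
  have hl1 : l + 1 + 1 ≤ k := by rwa [add_assoc, one_add_one_eq_two]
  exact ContDiff.sum fun p _ => ((hA.dirDeriv hl1 p).dirDeriv le_rfl p)

theorem ContDiff.differentiable_dirDeriv {k : WithTop ℕ∞} (hA : ContDiff ℝ k A) (hk : 2 ≤ k)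
    (p : Fin m) : Differentiable ℝ (_root_.dirDeriv A p) :=
  (hA.dirDeriv (l := 1) (by rwa [one_add_one_eq_two]) p).differentiable one_ne_zero

theorem dirDeriv_add (hA : Differentiable ℝ A) (hB : Differentiable ℝ B) (p : Fin m) :
    dirDeriv (fun y => A y + B y) p = fun y => dirDeriv A p y + dirDeriv B p y := by
  ext1 y
  simp only [dirDeriv, fderiv_fun_add (hA y) (hB y), add_apply]

theorem dirDeriv_const_smul (hA : Differentiable ℝ A) (c : ℝ) (p : Fin m) :
    dirDeriv (fun y => c • A y) p = fun y => c • dirDeriv A p y := by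
  ext1 y
  simp only [dirDeriv, fderiv_fun_const_smul (hA y), smul_apply]

theorem dirDeriv_mul (hA : Differentiable ℝ A) (hB : Differentiable ℝ B) (p : Fin m) :
    dirDeriv (fun y => A y * B y) p
      = fun y => A y * dirDeriv B p y + dirDeriv A p y * B y := by
  ext1 y
  simp [dirDeriv, fderiv_fun_mul' (hA y) (hB y)]

theorem dirDeriv_const (c : Matrix (Fin n) (Fin n) ℝ) (p : Fin m) :
    dirDeriv (fun _ => c) p = fun _ => 0 := by
  ext1 x
  simp [dirDeriv]

theorem matLap_const (c : Matrix (Fin n) (Fin n) ℝ) (x : Fin m → ℝ) :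
    matLap (fun _ => c) x = 0 := by
  simp only [matLap, dirDeriv_const, Finset.sum_const_zero]

theorem matLap_const_smul (hA : ContDiff ℝ 2 A) (c : ℝ) (x : Fin m → ℝ) :
    matLap (fun y => c • A y) x = c • matLap A x := by
  have hA1 : Differentiable ℝ A := hA.differentiable two_ne_zero
  have hdA := hA.differentiable_dirDeriv le_rfl
  simp only [matLap, dirDeriv_const_smul hA1, dirDeriv_const_smul (hdA _), Finset.smul_sum]

theorem matLap_add (hA : ContDiff ℝ 2 A) (hB : ContDiff ℝ 2 B) (x : Fin m → ℝ) :
    matLap (fun y => A y + B y) x = matLap A x + matLap B x := by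
  have hA1 : Differentiable ℝ A := hA.differentiable two_ne_zero
  have hB1 : Differentiable ℝ B := hB.differentiable two_ne_zero
  have hdA := hA.differentiable_dirDeriv le_rfl
  have hdB := hB.differentiable_dirDeriv le_rfl
  simp only [matLap, dirDeriv_add hA1 hB1, dirDeriv_add (hdA _) (hdB _), Finset.sum_add_distrib]

theorem matLap_mul (hA : ContDiff ℝ 2 A) (hB : ContDiff ℝ 2 B) (x : Fin m → ℝ) :
    matLap (fun y => A y * B y) x
      = A x * matLap B x + (2 : ℝ) • ∑ p, dirDeriv A p x * dirDeriv B p x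
        + matLap A x * B x := by
  have hA1 : Differentiable ℝ A := hA.differentiable two_ne_zero
  have hB1 : Differentiable ℝ B := hB.differentiable two_ne_zero
  have hdA := hA.differentiable_dirDeriv le_rfl
  have hdB := hB.differentiable_dirDeriv le_rfl
  have hsecond (p : Fin m) : dirDeriv (dirDeriv (fun y => A y * B y) p) p x
      = A x * dirDeriv (dirDeriv B p) p x + (2 : ℝ) • (dirDeriv A p x * dirDeriv B p x)
        + dirDeriv (dirDeriv A p) p x * B x := by
    rw [dirDeriv_mul hA1 hB1, dirDeriv_add (hA1.fun_mul (hdB p)) ((hdA p).fun_mul hB1),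
      dirDeriv_mul hA1 (hdB p), dirDeriv_mul (hdA p) hB1]
    module
  simp only [matLap, hsecond, Finset.sum_add_distrib, ← Finset.mul_sum, ← Finset.sum_mul,
    ← Finset.smul_sum]

end Laplacian

/-- The Euler–Lagrange equation `Δ²J = Q(J, ∇J, ∇²J, ∇³J)` for biharmonic almost complex
structures, rewritten from `[Δ²J, J] = 0` using `Δ²(J²) = 0`. -/
theorem bilaplacian_eq_Q_of_commute {m n : ℕ}
    (J : (Fin m → ℝ) → Matrix (Fin n) (Fin n) ℝ)
    (hJ : ContDiff ℝ 4 J)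
    (hsq : ∀ x, J x * J x = -1)
    (hcomm : ∀ x, matLap (matLap J) x * J x = J x * matLap (matLap J) x) :
    ∀ x,
      matLap (matLap J) x
        = J x * matLap J x * matLap J x
          + J x * ∑ p : Fin m, dirDeriv J p x * dirDeriv (matLap J) p x
          + J x * ∑ p : Fin m, dirDeriv (matLap J) p x * dirDeriv J p x
          + J x * matLap (fun y => ∑ p : Fin m, dirDeriv J p y * dirDeriv J p y) x := by
  intro x
  set S := fun y => ∑ p : Fin m, dirDeriv J p y * dirDeriv J p y
  have hJ2 : ContDiff ℝ 2 J := hJ.of_le (by norm_num)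
  have hΔJ : ContDiff ℝ 2 (matLap J) := hJ.matLap (by norm_num)
  have hS : ContDiff ℝ 2 S := ContDiff.sum fun p _ =>
    have hdJ := hJ.dirDeriv (l := 2) (by norm_num) p
    hdJ.mul hdJ
  have hΔsq (y : Fin m → ℝ) : J y * matLap J y + (2 : ℝ) • S y + matLap J y * J y = 0 := by
    rw [← matLap_mul hJ2 hJ2, funext hsq, matLap_const]
  -- `Δ²(J²) = Δ²(-1) = 0`, expanded by the Leibniz rule
  have hΔΔsq := matLap_const (0 : Matrix (Fin n) (Fin n) ℝ) x
  rw [← funext hΔsq, matLap_add ((hJ2.mul hΔJ).add (hS.const_smul _)) (hΔJ.mul hJ2),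
    matLap_add (hJ2.mul hΔJ) (hS.const_smul _), matLap_const_smul hS,
    matLap_mul hJ2 hΔJ, matLap_mul hΔJ hJ2] at hΔΔsq
  rw [eq_mul_of_mul_add_mul_add_two_smul_eq_zero (hsq x) (hcomm x)
    (q := matLap J x * matLap J x + ∑ p, dirDeriv J p x * dirDeriv (matLap J) p x
      + ∑ p, dirDeriv (matLap J) p x * dirDeriv J p x + matLap S x)
    (by rw [← hΔΔsq]; module)]
  noncomm_ring
end

section
/- Let A be a real n×n matrix with Aᵀ = -A and ‖A·A + I‖ < 1 (operator norm). Then -A·A is a symmetric positive definite matrix; it has a unique symmetric positive definite square root Q (Q² = -A·A); Q commutes with A; and the matrix J = Q⁻¹·A satisfies J² = -I and Jᵀ = -J. -/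
open Matrix
open scoped Matrix.Norms.L2Operator MatrixOrder ComplexOrder

/-!
Skewness makes `-A·A = Aᵀ·A` positive semidefinite, and the norm bound makes it invertible (a
Neumann series), hence positive definite. Its square root `Q` from the continuous functional
calculus is positive definite and, being a continuous function of `-A·A`, commutes with `A`.
Then `(Q⁻¹A)² = Q⁻²A² = -1` and `(Q⁻¹A)ᵀ = AᵀQ⁻¹ = -Q⁻¹A`.
-/

theorem isUnit_neg_of_norm_add_one_lt_one {R : Type*} [NormedRing R] [HasSummableGeomSeries R]
    {a : R} (h : ‖a + 1‖ < 1) : IsUnit (-a) := by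
  simpa using isUnit_one_sub_of_norm_lt_one h

namespace Matrix

variable {m : Type*} [Fintype m]

theorem neg_mul_self_eq_transpose_mul_self {R : Type*} [Ring R] {A : Matrix m m R}
    (hA : Aᵀ = -A) : -(A * A) = Aᵀ * A := by
  rw [hA, neg_mul]

theorem posSemidef_neg_mul_self {A : Matrix m m ℝ} (hA : Aᵀ = -A) : (-(A * A)).PosSemidef := by
  simpa [neg_mul_self_eq_transpose_mul_self hA] using posSemidef_conjTranspose_mul_self A

theorem posDef_neg_mul_self_of_norm_mul_self_add_one_lt_one [DecidableEq m] {A : Matrix m m ℝ}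
    (hA : Aᵀ = -A) (hnorm : ‖A * A + 1‖ < 1) : (-(A * A)).PosDef :=
  (posSemidef_neg_mul_self hA).posDef_iff_isUnit.mpr (isUnit_neg_of_norm_add_one_lt_one hnorm)

theorem PosDef.posDef_sqrt {𝕜 : Type*} [RCLike 𝕜] [DecidableEq m] {S : Matrix m m 𝕜}
    (hS : S.PosDef) : (CFC.sqrt S).PosDef :=
  (IsStrictlyPositive.sqrt S hS.isStrictlyPositive).posDef

theorem Commute.sqrt_left {𝕜 : Type*} [RCLike 𝕜] [DecidableEq m] {S B : Matrix m m 𝕜}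
    (h : Commute S B) : Commute (CFC.sqrt S) B := by
  rw [CFC.sqrt_eq_cfc]
  exact h.cfc_nnreal _

theorem Commute.nonsing_inv_left {R : Type*} [CommRing R] [DecidableEq m] {Q A : Matrix m m R}
    (h : Commute Q A) : Commute Q⁻¹ A := by
  by_cases hQ : IsUnit Q
  · simpa [coe_units_inv] using h.units_inv_left (u := hQ.unit)
  · rw [nonsing_inv_apply_not_isUnit _ (by rwa [← isUnit_iff_isUnit_det])]
    exact Commute.zero_left A

section ComplexStructure

variable {R : Type*} [CommRing R] [DecidableEq m] {Q A : Matrix m m R}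

theorem inv_mul_mul_inv_mul_eq_neg_one (hQ : IsUnit Q) (hQA : Commute Q A)
    (hsq : Q * Q = -(A * A)) : (Q⁻¹ * A) * (Q⁻¹ * A) = -1 := by
  have hdet : IsUnit Q.det := (isUnit_iff_isUnit_det Q).mp hQ
  calc (Q⁻¹ * A) * (Q⁻¹ * A) = Q⁻¹ * (Q⁻¹ * (A * A)) := by
        rw [mul_assoc, ← mul_assoc A, ← hQA.nonsing_inv_left.eq, mul_assoc]
    _ = -1 := by
        rw [← neg_neg (A * A), ← hsq, mul_neg, mul_neg, ← mul_assoc Q⁻¹ Q,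
          nonsing_inv_mul Q hdet, one_mul, nonsing_inv_mul Q hdet]

theorem transpose_inv_mul_eq_neg (hQ : Qᵀ = Q) (hA : Aᵀ = -A) (hQA : Commute Q A) :
    (Q⁻¹ * A)ᵀ = -(Q⁻¹ * A) := by
  rw [transpose_mul, hA, transpose_nonsing_inv, hQ, neg_mul, hQA.nonsing_inv_left.eq]

end ComplexStructure

end Matrix

/-- From a skew-symmetric matrix `A` with `‖A·A + I‖ < 1` (operator norm), the matrix
`-A·A` is symmetric positive definite; it has a unique symmetric positive definite square
root `Q`; `Q` commutes with `A`; and `J = Q⁻¹·A` is a compatible linear complex structure. -/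
theorem compatible_acs_from_skew_part {n : ℕ}
    (A : Matrix (Fin n) (Fin n) ℝ)
    (hA : Aᵀ = -A)
    (hnorm : ‖A * A + 1‖ < 1) :
    (-(A * A))ᵀ = -(A * A) ∧ (-(A * A)).PosDef ∧
    ∃ Q : Matrix (Fin n) (Fin n) ℝ,
      (Qᵀ = Q ∧ Q.PosDef ∧ Q * Q = -(A * A)) ∧
      (∀ Q' : Matrix (Fin n) (Fin n) ℝ, Q'ᵀ = Q' → Q'.PosDef → Q' * Q' = -(A * A) → Q' = Q) ∧
      Q * A = A * Q ∧
      (Q⁻¹ * A) * (Q⁻¹ * A) = -1 ∧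
      (Q⁻¹ * A)ᵀ = -(Q⁻¹ * A) := by
  have hS : (-(A * A)).PosDef := posDef_neg_mul_self_of_norm_mul_self_add_one_lt_one hA hnorm
  set Q := CFC.sqrt (-(A * A))
  have hQ : Q.PosDef := hS.posDef_sqrt
  have hQT : Qᵀ = Q := hQ.isHermitian
  have hQQ : Q * Q = -(A * A) := CFC.sqrt_mul_sqrt_self _ hS.posSemidef.nonneg
  have hQA : Commute Q A := ((Commute.refl A).mul_left (.refl A)).neg_left.sqrt_left
  exact ⟨hS.isHermitian, hS, Q, ⟨hQT, hQ, hQQ⟩,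
    fun Q' _ hQ' hsq' => (CFC.sqrt_unique hsq' hQ'.posSemidef.nonneg).symm, hQA.eq,
    inv_mul_mul_inv_mul_eq_neg_one hQ.isUnit hQA hQQ, transpose_inv_mul_eq_neg hQT hA hQA⟩
end

section
/- Let n ≥ 1 and let φ : ℝⁿ → ℝ be a continuous nonnegative function supported in the closed unit ball with ∫_{ℝⁿ} φ = 1. Then there exists a constant C > 0 (depending only on n and φ) such that for every R > 0 and every C¹ function f : ℝⁿ → ℝ, ∫_{B_R} |f(y) - f_*|² dy ≤ C · R² · ∫_{B_R} ‖∇f(y)‖² dy, where B_R is the ball of radius R centered at the origin and f_* = ∫_{B_R} R^{-n} φ(y/R) f(y) dy. -/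
/-!
Write `f y - f z` as the integral of `Df` along the segment from `z` to `y`. Jensen's inequality
for the probability density `ψ = φ_R` and Cauchy–Schwarz along the segment give
`|f y - f_*|² ≤ (2R)² ∫_{B_R} ψ(z) ∫₀¹ |Df((1-t) z + t y)|² dt dz`.
Integrating in `y`, the part `t ≤ 1/2` is handled by `ψ ≤ sup φ / Rⁿ` and the substitution
`z ↦ (1-t) z + t y`, the part `t ≥ 1/2` by `∫ ψ = 1` and the substitution `y ↦ (1-t) z + t y`;
both Jacobians are at least `2⁻ⁿ`, and `|B_R| / Rⁿ = |B_1|` makes the constant independent of `R`.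
-/

open MeasureTheory Set Module Metric
open scoped ENNReal

section Integral

variable {α : Type*} [MeasurableSpace α] {μ : Measure α}

theorem sq_lintegral_mul_le {a d : α → ℝ≥0∞} (ha : AEMeasurable a μ) (hd : AEMeasurable d μ)
    (ha1 : ∫⁻ x, a x ∂μ ≤ 1) :
    (∫⁻ x, a x * d x ∂μ) ^ 2 ≤ ∫⁻ x, a x * d x ^ 2 ∂μ := by
  have half : (2⁻¹ : ℝ) + 2⁻¹ = 1 := by norm_num
  have sqrt_sq : ∀ x : ℝ≥0∞, (x ^ (2⁻¹ : ℝ)) ^ 2 = x := fun x => by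
    rw [← ENNReal.rpow_natCast, ← ENNReal.rpow_mul]; norm_num
  have hsplit : ∀ x, a x * d x = a x ^ (2⁻¹ : ℝ) * (a x * d x ^ 2) ^ (2⁻¹ : ℝ) := fun x => by
    rw [ENNReal.mul_rpow_of_nonneg _ _ (by norm_num), ← mul_assoc,
      ← ENNReal.rpow_add_of_nonneg _ _ (by norm_num) (by norm_num), half, ENNReal.rpow_one,
      ← ENNReal.rpow_natCast, ← ENNReal.rpow_mul]
    norm_num
  have holder := ENNReal.lintegral_mul_norm_pow_le (g := fun x => a x * d x ^ 2) ha
    (ha.mul (hd.pow_const 2)) (by norm_num : (0 : ℝ) ≤ 2⁻¹) (by norm_num) half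
  rw [← lintegral_congr hsplit] at holder
  calc (∫⁻ x, a x * d x ∂μ) ^ 2
      ≤ ((∫⁻ x, a x ∂μ) ^ (2⁻¹ : ℝ) * (∫⁻ x, a x * d x ^ 2 ∂μ) ^ (2⁻¹ : ℝ)) ^ 2 := by
        gcongr
    _ = (∫⁻ x, a x ∂μ) * ∫⁻ x, a x * d x ^ 2 ∂μ := by rw [mul_pow, sqrt_sq, sqrt_sq]
    _ ≤ ∫⁻ x, a x * d x ^ 2 ∂μ := mul_le_of_le_one_left' ha1

theorem enorm_sub_integral_mul_sq_le {ψ g : α → ℝ} (hψ0 : ∀ x, 0 ≤ ψ x) (hψ : Integrable ψ μ)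
    (hψg : Integrable (fun x => ψ x * g x) μ) (hψ1 : ∫ x, ψ x ∂μ = 1) (hg : AEMeasurable g μ)
    (r : ℝ) :
    ‖r - ∫ x, ψ x * g x ∂μ‖ₑ ^ 2 ≤ ∫⁻ x, ‖ψ x‖ₑ * ‖r - g x‖ₑ ^ 2 ∂μ := by
  have hmean : r - ∫ x, ψ x * g x ∂μ = ∫ x, ψ x * (r - g x) ∂μ := by
    simp_rw [mul_sub]
    rw [integral_sub (hψ.mul_const r) hψg, integral_mul_const, hψ1, one_mul]
  have hmass : ∫⁻ x, ‖ψ x‖ₑ ∂μ ≤ 1 := by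
    rw [← ofReal_integral_norm_eq_lintegral_enorm hψ]
    simp [Real.norm_of_nonneg (hψ0 _), hψ1]
  calc ‖r - ∫ x, ψ x * g x ∂μ‖ₑ ^ 2
      ≤ (∫⁻ x, ‖ψ x‖ₑ * ‖r - g x‖ₑ ∂μ) ^ 2 := by
        rw [hmean]
        gcongr
        simpa only [enorm_mul] using
          enorm_integral_le_lintegral_enorm (μ := μ) (fun x => ψ x * (r - g x))
    _ ≤ ∫⁻ x, ‖ψ x‖ₑ * ‖r - g x‖ₑ ^ 2 ∂μ :=
        sq_lintegral_mul_le hψ.aemeasurable.enorm (aemeasurable_const.sub hg).enorm hmass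

theorem ofReal_integral_norm_sq_le {F : Type*} [NormedAddCommGroup F] (g : α → F) :
    ENNReal.ofReal (∫ x, ‖g x‖ ^ 2 ∂μ) ≤ ∫⁻ x, ‖g x‖ₑ ^ 2 ∂μ := by
  rw [← Real.enorm_of_nonneg (integral_nonneg fun x => by positivity)]
  refine (enorm_integral_le_lintegral_enorm _).trans_eq (lintegral_congr fun x => ?_)
  rw [enorm_pow, Real.enorm_of_nonneg (norm_nonneg _), ofReal_norm]

theorem ofReal_integral_norm_sq_eq {F : Type*} [NormedAddCommGroup F] {g : α → F}
    (hg : Integrable (fun x => ‖g x‖ ^ 2) μ) :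
    ENNReal.ofReal (∫ x, ‖g x‖ ^ 2 ∂μ) = ∫⁻ x, ‖g x‖ₑ ^ 2 ∂μ := by
  rw [ofReal_integral_eq_lintegral_ofReal hg (ae_of_all _ fun x => sq_nonneg _)]
  simp_rw [ENNReal.ofReal_pow (norm_nonneg _), ofReal_norm]

end Integral

section Segment

variable {E : Type*} [NormedAddCommGroup E] [NormedSpace ℝ E] {f : E → ℝ}

theorem sub_eq_integral_fderiv_segment (hf : ContDiff ℝ 1 f) (y z : E) :
    f y - f z = ∫ t in Ioc (0 : ℝ) 1, fderiv ℝ f ((1 - t) • z + t • y) (y - z) := by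
  have hseg : ∀ t : ℝ, HasDerivAt (fun s : ℝ => (1 - s) • z + s • y) (y - z) t := fun t => by
    rw [← funext (AffineMap.lineMap_apply_module (k := ℝ) z y)]
    exact AffineMap.hasDerivAt_lineMap
  have hderiv : ∀ t : ℝ, HasDerivAt (fun s : ℝ => f ((1 - s) • z + s • y))
      (fderiv ℝ f ((1 - t) • z + t • y) (y - z)) t := fun t =>
    ((hf.differentiable one_ne_zero _).hasFDerivAt).comp_hasDerivAt t (hseg t)
  have hcont : Continuous fun t : ℝ => fderiv ℝ f ((1 - t) • z + t • y) (y - z) := by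
    have := hf.continuous_fderiv one_ne_zero
    fun_prop
  rw [← intervalIntegral.integral_of_le zero_le_one,
    intervalIntegral.integral_eq_sub_of_hasDerivAt (fun t _ => hderiv t)
      (hcont.intervalIntegrable 0 1)]
  simp

theorem enorm_sub_sq_le_lintegral_segment (hf : ContDiff ℝ 1 f) (y z : E) :
    ‖f y - f z‖ₑ ^ 2
      ≤ ‖y - z‖ₑ ^ 2 * ∫⁻ t in Ioc (0 : ℝ) 1, ‖fderiv ℝ f ((1 - t) • z + t • y)‖ₑ ^ 2 := by
  have hmass : ∫⁻ _ in Ioc (0 : ℝ) 1, (1 : ℝ≥0∞) ≤ 1 := by simp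
  have hmeas : Measurable fun t : ℝ => ‖fderiv ℝ f ((1 - t) • z + t • y)‖ₑ :=
    (hf.continuous_fderiv one_ne_zero |>.comp (by fun_prop)).enorm.measurable
  calc ‖f y - f z‖ₑ ^ 2
      ≤ (∫⁻ t in Ioc (0 : ℝ) 1, ‖fderiv ℝ f ((1 - t) • z + t • y)‖ₑ * ‖y - z‖ₑ) ^ 2 := by
        rw [sub_eq_integral_fderiv_segment hf]
        gcongr
        exact (enorm_integral_le_lintegral_enorm _).trans
          (lintegral_mono fun t => ContinuousLinearMap.le_opENorm _ _)
    _ = ‖y - z‖ₑ ^ 2 * (∫⁻ t in Ioc (0 : ℝ) 1, 1 * ‖fderiv ℝ f ((1 - t) • z + t • y)‖ₑ) ^ 2 := by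
        simp only [one_mul]
        rw [lintegral_mul_const _ hmeas, mul_pow, mul_comm]
    _ ≤ ‖y - z‖ₑ ^ 2 * ∫⁻ t in Ioc (0 : ℝ) 1, ‖fderiv ℝ f ((1 - t) • z + t • y)‖ₑ ^ 2 := by
        gcongr
        simpa only [one_mul] using sq_lintegral_mul_le aemeasurable_const hmeas.aemeasurable hmass

theorem norm_gradient {F : Type*} [NormedAddCommGroup F] [InnerProductSpace ℝ F] [CompleteSpace F]
    (f : F → ℝ) (x : F) : ‖gradient f x‖ = ‖fderiv ℝ f x‖ := by
  simp [gradient]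

end Segment

section SegmentLIntegral

variable {E : Type*} [AddCommGroup E] [Module ℝ E]

noncomputable def segmentLIntegral (G : E → ℝ≥0∞) (I : Set ℝ) (z y : E) : ℝ≥0∞ :=
  ∫⁻ t in I, G ((1 - t) • z + t • y)

theorem segmentLIntegral_Ioc_eq_add (G : E → ℝ≥0∞) (z y : E) :
    segmentLIntegral G (Ioc 0 1) z y
      = segmentLIntegral G (Ioc 0 2⁻¹) z y + segmentLIntegral G (Ioc 2⁻¹ 1) z y := by
  rw [segmentLIntegral, ← Ioc_union_Ioc_eq_Ioc (by norm_num : (0 : ℝ) ≤ 2⁻¹) (by norm_num),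
    lintegral_union measurableSet_Ioc (Ioc_disjoint_Ioc_of_le le_rfl)]
  rfl

end SegmentLIntegral

section HaarMeasure

variable {E : Type*} [NormedAddCommGroup E] [NormedSpace ℝ E] [FiniteDimensional ℝ E]
  [MeasurableSpace E] [BorelSpace E]

theorem measurable_segmentLIntegral {G : E → ℝ≥0∞} (hG : Measurable G) (I : Set ℝ) :
    Measurable (Function.uncurry (segmentLIntegral G I)) :=
  Measurable.lintegral_prod_right <| hG.comp
    (by fun_prop : Continuous fun q : (E × E) × ℝ => (1 - q.2) • q.1.1 + q.2 • q.1.2).measurable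

variable {μ : Measure E} [μ.IsAddHaarMeasure] {G : E → ℝ≥0∞}

theorem lintegral_comp_smul_add_le (hG : Measurable G) {c : ℝ} (hc : 2⁻¹ ≤ c) (v : E) :
    ∫⁻ w, G (c • w + v) ∂μ ≤ 2 ^ finrank ℝ E * ∫⁻ x, G x ∂μ := by
  have hc0 : 0 < c := lt_of_lt_of_le (by norm_num) hc
  have hjac : ENNReal.ofReal |(c ^ finrank ℝ E)⁻¹| ≤ 2 ^ finrank ℝ E := by
    rw [abs_of_pos (by positivity), ← inv_pow, ← ENNReal.ofReal_ofNat,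
      ← ENNReal.ofReal_pow zero_le_two]
    gcongr
    exact inv_le_of_inv_le₀ (by norm_num) hc
  calc ∫⁻ w, G (c • w + v) ∂μ = ∫⁻ w, G (w + v) ∂μ.map (c • ·) :=
        (lintegral_map (hG.comp (measurable_add_const v)) (measurable_const_smul c)).symm
    _ = ENNReal.ofReal |(c ^ finrank ℝ E)⁻¹| * ∫⁻ x, G x ∂μ := by
        rw [Measure.map_addHaar_smul μ hc0.ne', lintegral_smul_measure, smul_eq_mul,
          lintegral_add_right_eq_self]
    _ ≤ 2 ^ finrank ℝ E * ∫⁻ x, G x ∂μ := by gcongr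

theorem lintegral_setLIntegral_comp_smul_add_le (hG : Measurable G) {I : Set ℝ} {c : ℝ → ℝ}
    {v : ℝ → E} (hc : Continuous c) (hv : Continuous v) (hcI : ∀ t ∈ I, 2⁻¹ ≤ c t) :
    ∫⁻ w, (∫⁻ t in I, G (c t • w + v t)) ∂μ ≤ volume I * (2 ^ finrank ℝ E * ∫⁻ x, G x ∂μ) := by
  have hmeas : Measurable (Function.uncurry fun w t => G (c t • w + v t)) :=
    hG.comp (by fun_prop : Continuous fun p : E × ℝ => c p.2 • p.1 + v p.2).measurable
  calc ∫⁻ w, (∫⁻ t in I, G (c t • w + v t)) ∂μ = ∫⁻ t in I, ∫⁻ w, G (c t • w + v t) ∂μ :=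
        lintegral_lintegral_swap hmeas.aemeasurable
    _ ≤ ∫⁻ _ in I, 2 ^ finrank ℝ E * ∫⁻ x, G x ∂μ :=
        setLIntegral_mono measurable_const fun t ht => lintegral_comp_smul_add_le hG (hcI t ht) _
    _ = volume I * (2 ^ finrank ℝ E * ∫⁻ x, G x ∂μ) := by rw [setLIntegral_const, mul_comm]

variable {a : E → ℝ≥0∞} {I : Set ℝ}

theorem setLIntegral_setLIntegral_segmentLIntegral_le_of_le_half (hG : Measurable G) {A : ℝ≥0∞}
    (haA : ∀ z, a z ≤ A) (hI : ∀ t ∈ I, t ≤ 2⁻¹) (s : Set E) :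
    ∫⁻ y in s, ∫⁻ z in s, a z * segmentLIntegral G I z y ∂μ ∂μ
      ≤ A * μ s * (volume I * (2 ^ finrank ℝ E * ∫⁻ x, G x ∂μ)) := by
  have hz : ∀ y, ∫⁻ z, segmentLIntegral G I z y ∂μ
      ≤ volume I * (2 ^ finrank ℝ E * ∫⁻ x, G x ∂μ) := fun y =>
    lintegral_setLIntegral_comp_smul_add_le hG (c := fun t => 1 - t) (v := fun t => t • y)
      (by fun_prop) (by fun_prop) fun t ht => by linarith [hI t ht]
  have hKz : ∀ y, Measurable fun z => segmentLIntegral G I z y := fun y =>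
    (measurable_segmentLIntegral hG I).comp measurable_prodMk_right
  calc ∫⁻ y in s, ∫⁻ z in s, a z * segmentLIntegral G I z y ∂μ ∂μ
      ≤ ∫⁻ y in s, A * ∫⁻ z, segmentLIntegral G I z y ∂μ ∂μ := by
        refine lintegral_mono fun y => ?_
        rw [← lintegral_const_mul _ (hKz y)]
        exact (setLIntegral_le_lintegral _ _).trans (lintegral_mono fun z => by gcongr; exact haA z)
    _ ≤ ∫⁻ _ in s, A * (volume I * (2 ^ finrank ℝ E * ∫⁻ x, G x ∂μ)) ∂μ := by
        gcongr with y
        exact hz y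
    _ = A * μ s * (volume I * (2 ^ finrank ℝ E * ∫⁻ x, G x ∂μ)) := by
        rw [setLIntegral_const]; ring

theorem setLIntegral_setLIntegral_segmentLIntegral_le_of_half_le (hG : Measurable G)
    (ha : Measurable a) (hI : ∀ t ∈ I, 2⁻¹ ≤ t) (s : Set E) :
    ∫⁻ y in s, ∫⁻ z in s, a z * segmentLIntegral G I z y ∂μ ∂μ
      ≤ (∫⁻ z in s, a z ∂μ) * (volume I * (2 ^ finrank ℝ E * ∫⁻ x, G x ∂μ)) := by
  have hy : ∀ z, ∫⁻ y, segmentLIntegral G I z y ∂μ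
      ≤ volume I * (2 ^ finrank ℝ E * ∫⁻ x, G x ∂μ) := fun z => by
    simp_rw [segmentLIntegral, add_comm ((1 - _ : ℝ) • z)]
    exact lintegral_setLIntegral_comp_smul_add_le hG (c := fun t => t)
      (v := fun t => (1 - t) • z) (by fun_prop) (by fun_prop) hI
  have hKy : ∀ z, Measurable (segmentLIntegral G I z) := fun z =>
    (measurable_segmentLIntegral hG I).comp measurable_prodMk_left
  have haK : Measurable fun p : E × E => a p.2 * segmentLIntegral G I p.2 p.1 :=
    (ha.comp measurable_snd).mul ((measurable_segmentLIntegral hG I).comp measurable_swap)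
  calc ∫⁻ y in s, ∫⁻ z in s, a z * segmentLIntegral G I z y ∂μ ∂μ
      = ∫⁻ z in s, a z * ∫⁻ y in s, segmentLIntegral G I z y ∂μ ∂μ := by
        rw [lintegral_lintegral_swap haK.aemeasurable]
        exact lintegral_congr fun z => lintegral_const_mul _ (hKy z)
    _ ≤ ∫⁻ z in s, a z * (volume I * (2 ^ finrank ℝ E * ∫⁻ x, G x ∂μ)) ∂μ := by
        gcongr with z
        exact (setLIntegral_le_lintegral _ _).trans (hy z)
    _ = (∫⁻ z in s, a z ∂μ) * (volume I * (2 ^ finrank ℝ E * ∫⁻ x, G x ∂μ)) :=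
        lintegral_mul_const _ ha

theorem setLIntegral_setLIntegral_segmentLIntegral_Ioc_le (hG : Measurable G) (ha : Measurable a)
    {A : ℝ≥0∞} (haA : ∀ z, a z ≤ A) (s : Set E) :
    ∫⁻ y in s, ∫⁻ z in s, a z * segmentLIntegral G (Ioc 0 1) z y ∂μ ∂μ
      ≤ 2 ^ finrank ℝ E * (A * μ s + ∫⁻ z in s, a z ∂μ) * ∫⁻ x, G x ∂μ := by
  have hvol : volume (Ioc (0 : ℝ) 2⁻¹) ≤ 1 ∧ volume (Ioc (2⁻¹ : ℝ) 1) ≤ 1 := by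
    norm_num [Real.volume_Ioc]
  have haK : Measurable fun p : E × E => a p.2 * segmentLIntegral G (Ioc 0 2⁻¹) p.2 p.1 :=
    (ha.comp measurable_snd).mul ((measurable_segmentLIntegral hG _).comp measurable_swap)
  have hKz : ∀ y, Measurable fun z => a z * segmentLIntegral G (Ioc 0 2⁻¹) z y := fun y =>
    ha.mul ((measurable_segmentLIntegral hG _).comp measurable_prodMk_right)
  calc ∫⁻ y in s, ∫⁻ z in s, a z * segmentLIntegral G (Ioc 0 1) z y ∂μ ∂μ
      = ∫⁻ y in s, ∫⁻ z in s, a z * segmentLIntegral G (Ioc 0 2⁻¹) z y ∂μ ∂μ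
        + ∫⁻ y in s, ∫⁻ z in s, a z * segmentLIntegral G (Ioc 2⁻¹ 1) z y ∂μ ∂μ := by
        simp_rw [segmentLIntegral_Ioc_eq_add, mul_add, lintegral_add_left (hKz _)]
        exact lintegral_add_left haK.lintegral_prod_right' _
    _ ≤ A * μ s * (1 * (2 ^ finrank ℝ E * ∫⁻ x, G x ∂μ))
        + (∫⁻ z in s, a z ∂μ) * (1 * (2 ^ finrank ℝ E * ∫⁻ x, G x ∂μ)) := by
        gcongr
        · exact (setLIntegral_setLIntegral_segmentLIntegral_le_of_le_half hG haA
            (fun t ht => ht.2) s).trans (by gcongr; exact hvol.1)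
        · exact (setLIntegral_setLIntegral_segmentLIntegral_le_of_half_le hG ha
            (fun t ht => ht.1.le) s).trans (by gcongr; exact hvol.2)
    _ = 2 ^ finrank ℝ E * (A * μ s + ∫⁻ z in s, a z ∂μ) * ∫⁻ x, G x ∂μ := by ring

end HaarMeasure

section Poincare

variable {E : Type*} [NormedAddCommGroup E] [NormedSpace ℝ E] {f : E → ℝ} {s : Set E}

theorem enorm_sub_sq_le_ediam_sq_mul_segmentLIntegral (hf : ContDiff ℝ 1 f) (hs : Convex ℝ s)
    {y z : E} (hy : y ∈ s) (hz : z ∈ s) :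
    ‖f y - f z‖ₑ ^ 2 ≤ ediam s ^ 2
      * segmentLIntegral (s.indicator fun x => ‖fderiv ℝ f x‖ₑ ^ 2) (Ioc 0 1) z y := by
  have hseg : ∀ t ∈ Ioc (0 : ℝ) 1,
      s.indicator (fun x => ‖fderiv ℝ f x‖ₑ ^ 2) ((1 - t) • z + t • y)
        = ‖fderiv ℝ f ((1 - t) • z + t • y)‖ₑ ^ 2 := fun t ht =>
    indicator_of_mem (hs hz hy (by linarith [ht.2]) ht.1.le (by ring)) _
  rw [segmentLIntegral, setLIntegral_congr_fun measurableSet_Ioc hseg]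
  refine (enorm_sub_sq_le_lintegral_segment hf y z).trans ?_
  gcongr
  rw [← edist_eq_enorm_sub]
  exact edist_le_ediam_of_mem hy hz

variable [FiniteDimensional ℝ E] [MeasurableSpace E] [BorelSpace E] {μ : Measure E} {ψ : E → ℝ}

theorem enorm_sub_setIntegral_mul_sq_le (hf : ContDiff ℝ 1 f) (hs : Convex ℝ s)
    (hsm : MeasurableSet s) (hψm : Measurable ψ) (hψ0 : ∀ x, 0 ≤ ψ x) (hψ : IntegrableOn ψ s μ)
    (hψf : IntegrableOn (fun x => ψ x * f x) s μ) (hψ1 : ∫ x in s, ψ x ∂μ = 1) {y : E}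
    (hy : y ∈ s) :
    ‖f y - ∫ z in s, ψ z * f z ∂μ‖ₑ ^ 2 ≤ ediam s ^ 2 * ∫⁻ z in s,
      ‖ψ z‖ₑ * segmentLIntegral (s.indicator fun x => ‖fderiv ℝ f x‖ₑ ^ 2) (Ioc 0 1) z y ∂μ := by
  have hG : Measurable (s.indicator fun x => ‖fderiv ℝ f x‖ₑ ^ 2) :=
    ((measurable_fderiv ℝ f).enorm.pow_const 2).indicator hsm
  calc ‖f y - ∫ z in s, ψ z * f z ∂μ‖ₑ ^ 2
      ≤ ∫⁻ z in s, ‖ψ z‖ₑ * ‖f y - f z‖ₑ ^ 2 ∂μ :=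
        enorm_sub_integral_mul_sq_le hψ0 hψ hψf hψ1 hf.continuous.aemeasurable _
    _ ≤ ∫⁻ z in s, ediam s ^ 2 * (‖ψ z‖ₑ
          * segmentLIntegral (s.indicator fun x => ‖fderiv ℝ f x‖ₑ ^ 2) (Ioc 0 1) z y) ∂μ :=
        setLIntegral_mono' hsm fun z hz => by
          rw [mul_left_comm]
          gcongr
          exact enorm_sub_sq_le_ediam_sq_mul_segmentLIntegral hf hs hy hz
    _ = _ := lintegral_const_mul _
        (hψm.enorm.mul ((measurable_segmentLIntegral hG _).comp measurable_prodMk_right))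

variable [μ.IsAddHaarMeasure]

theorem setLIntegral_enorm_sub_setIntegral_mul_sq_le (hf : ContDiff ℝ 1 f) (hs : Convex ℝ s)
    (hsm : MeasurableSet s) (hψm : Measurable ψ) (hψ0 : ∀ x, 0 ≤ ψ x) {A : ℝ}
    (hψA : ∀ x, ψ x ≤ A) (hψ : IntegrableOn ψ s μ) (hψf : IntegrableOn (fun x => ψ x * f x) s μ)
    (hψ1 : ∫ x in s, ψ x ∂μ = 1) :
    ∫⁻ y in s, ‖f y - ∫ z in s, ψ z * f z ∂μ‖ₑ ^ 2 ∂μ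
      ≤ ediam s ^ 2 * (2 ^ finrank ℝ E * (ENNReal.ofReal A * μ s + 1))
        * ∫⁻ y in s, ‖fderiv ℝ f y‖ₑ ^ 2 ∂μ := by
  set G := s.indicator fun x => ‖fderiv ℝ f x‖ₑ ^ 2
  have hG : Measurable G := ((measurable_fderiv ℝ f).enorm.pow_const 2).indicator hsm
  have hmass : ∫⁻ z in s, ‖ψ z‖ₑ ∂μ = 1 := by
    rw [← ofReal_integral_norm_eq_lintegral_enorm hψ]
    simp [Real.norm_of_nonneg (hψ0 _), hψ1]
  have hmeas : Measurable fun y => ∫⁻ z in s, ‖ψ z‖ₑ * segmentLIntegral G (Ioc 0 1) z y ∂μ :=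
    Measurable.lintegral_prod_right' ((hψm.enorm.comp measurable_snd).mul
      ((measurable_segmentLIntegral hG _).comp measurable_swap))
  calc ∫⁻ y in s, ‖f y - ∫ z in s, ψ z * f z ∂μ‖ₑ ^ 2 ∂μ
      ≤ ∫⁻ y in s, ediam s ^ 2
          * ∫⁻ z in s, ‖ψ z‖ₑ * segmentLIntegral G (Ioc 0 1) z y ∂μ ∂μ :=
        setLIntegral_mono' hsm fun y hy =>
          enorm_sub_setIntegral_mul_sq_le hf hs hsm hψm hψ0 hψ hψf hψ1 hy
    _ ≤ ediam s ^ 2 * (2 ^ finrank ℝ E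
          * (ENNReal.ofReal A * μ s + ∫⁻ z in s, ‖ψ z‖ₑ ∂μ) * ∫⁻ x, G x ∂μ) := by
        rw [lintegral_const_mul _ hmeas]
        gcongr
        refine setLIntegral_setLIntegral_segmentLIntegral_Ioc_le hG hψm.enorm (fun z => ?_) s
        rw [Real.enorm_of_nonneg (hψ0 z)]
        exact ENNReal.ofReal_le_ofReal (hψA z)
    _ = ediam s ^ 2 * (2 ^ finrank ℝ E * (ENNReal.ofReal A * μ s + 1))
        * ∫⁻ y in s, ‖fderiv ℝ f y‖ₑ ^ 2 ∂μ := by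
        rw [hmass, lintegral_indicator hsm]
        ring

end Poincare

theorem ediam_ball_le {X : Type*} [PseudoMetricSpace X] (x : X) (r : ℝ) :
    ediam (ball x r) ≤ ENNReal.ofReal (2 * r) :=
  ediam_le_of_forall_dist_le fun y hy z hz =>
    (dist_triangle_right y z x).trans (by linarith [mem_ball.1 hy, mem_ball.1 hz])

section Rescaling

variable {E : Type*} [NormedAddCommGroup E] [NormedSpace ℝ E] [FiniteDimensional ℝ E]
  [MeasurableSpace E] [BorelSpace E] {μ : Measure E} [μ.IsAddHaarMeasure] {R : ℝ}

theorem setIntegral_ball_rescale_eq_integral {φ : E → ℝ}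
    (hφ : Function.support φ ⊆ closedBall 0 1) (hR : 0 < R) :
    ∫ z in ball (0 : E) R, (R ^ finrank ℝ E)⁻¹ * φ (R⁻¹ • z) ∂μ = ∫ x, φ x ∂μ := by
  have hball : ball (0 : E) R =ᵐ[μ] closedBall 0 R := by
    refine ae_eq_set.2 ⟨by simp [sdiff_eq_empty.2 ball_subset_closedBall], ?_⟩
    rw [closedBall_sdiff_ball]
    exact Measure.addHaar_sphere_of_ne_zero μ 0 hR.ne'
  have hsupp : ∀ z ∉ closedBall (0 : E) R, (R ^ finrank ℝ E)⁻¹ * φ (R⁻¹ • z) = 0 := by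
    intro z hz
    suffices φ (R⁻¹ • z) = 0 by rw [this, mul_zero]
    refine Function.notMem_support.mp fun h => hz ?_
    have := hφ h
    simp only [mem_closedBall, dist_zero_right, norm_smul, Real.norm_eq_abs,
      abs_inv, abs_of_pos hR] at this ⊢
    rwa [inv_mul_le_iff₀ hR, mul_one] at this
  rw [setIntegral_congr_set hball, setIntegral_eq_integral_of_forall_compl_eq_zero hsupp,
    integral_const_mul, Measure.integral_comp_inv_smul_of_nonneg μ φ hR.le, smul_eq_mul,
    inv_mul_cancel_left₀ (pow_pos hR _).ne']

theorem ofReal_inv_pow_mul_mul_measure_ball (hR : 0 < R) {M : ℝ} (hM : 0 ≤ M) :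
    ENNReal.ofReal ((R ^ finrank ℝ E)⁻¹ * M) * μ (ball 0 R)
      = ENNReal.ofReal (M * (μ (ball 0 1)).toReal) := by
  rw [Measure.addHaar_ball_of_pos _ _ hR, ENNReal.ofReal_mul hM,
    ENNReal.ofReal_toReal measure_ball_lt_top.ne, ENNReal.ofReal_mul (by positivity),
    mul_right_comm, ← mul_assoc, ← ENNReal.ofReal_mul (by positivity),
    inv_mul_cancel₀ (pow_pos hR _).ne', ENNReal.ofReal_one, one_mul, mul_comm]

theorem setIntegral_ball_sq_abs_sub_setIntegral_mul_le {f : E → ℝ} (hf : ContDiff ℝ 1 f)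
    (hR : 0 < R) {ψ : E → ℝ} (hψc : Continuous ψ) (hψ0 : ∀ x, 0 ≤ ψ x) {M : ℝ} (hM : 0 ≤ M)
    (hψM : ∀ x, ψ x ≤ (R ^ finrank ℝ E)⁻¹ * M) (hψ1 : ∫ x in ball 0 R, ψ x ∂μ = 1) :
    ∫ y in ball 0 R, |f y - ∫ z in ball 0 R, ψ z * f z ∂μ| ^ 2 ∂μ
      ≤ 4 * 2 ^ finrank ℝ E * (M * (μ (ball 0 1)).toReal + 1) * R ^ 2
        * ∫ y in ball 0 R, ‖fderiv ℝ f y‖ ^ 2 ∂μ := by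
  have hint : ∀ g : E → ℝ, Continuous g → IntegrableOn g (ball 0 R) μ := fun g hg =>
    (hg.continuousOn.integrableOn_compact (isCompact_closedBall 0 R)).mono_set
      ball_subset_closedBall
  have hC : ENNReal.ofReal (2 * R) ^ 2
        * (2 ^ finrank ℝ E * (ENNReal.ofReal (M * (μ (ball 0 1)).toReal) + 1))
      = ENNReal.ofReal (4 * 2 ^ finrank ℝ E * (M * (μ (ball 0 1)).toReal + 1) * R ^ 2) := by
    rw [← ENNReal.ofReal_one, ← ENNReal.ofReal_add (by positivity) zero_le_one,
      ← ENNReal.ofReal_ofNat 2, ← ENNReal.ofReal_pow zero_le_two,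
      ← ENNReal.ofReal_mul (by positivity), ← ENNReal.ofReal_pow (by positivity),
      ← ENNReal.ofReal_mul (by positivity)]
    congr 1
    ring
  rw [← ENNReal.ofReal_le_ofReal_iff (by positivity), ENNReal.ofReal_mul (by positivity), ← hC,
    ofReal_integral_norm_sq_eq (hint _ ((hf.continuous_fderiv one_ne_zero).norm.pow 2))]
  calc _ ≤ _ := by simpa only [Real.norm_eq_abs] using ofReal_integral_norm_sq_le (F := ℝ) _
    _ ≤ _ := setLIntegral_enorm_sub_setIntegral_mul_sq_le hf (convex_ball 0 R)
        measurableSet_ball hψc.measurable hψ0 hψM (hint ψ hψc) (hint _ (hψc.mul hf.continuous)) hψ1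
    _ ≤ _ := by
        rw [ofReal_inv_pow_mul_mul_measure_ball hR hM]
        gcongr
        exact ediam_ball_le _ _

end Rescaling

theorem poincare_weighted_average_general {n : ℕ}
    (φ : EuclideanSpace ℝ (Fin n) → ℝ)
    (hφc : Continuous φ) (hφ0 : ∀ x, 0 ≤ φ x)
    (hφsupp : Function.support φ ⊆ Metric.closedBall 0 1)
    (hφint : ∫ x, φ x = 1) :
    ∃ C > 0, ∀ R > 0, ∀ f : EuclideanSpace ℝ (Fin n) → ℝ, ContDiff ℝ 1 f →
      (∫ y in Metric.ball (0 : EuclideanSpace ℝ (Fin n)) R,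
          |f y - ∫ z in Metric.ball (0 : EuclideanSpace ℝ (Fin n)) R,
              (R ^ n)⁻¹ * φ (R⁻¹ • z) * f z| ^ 2)
        ≤ C * R ^ 2 *
          ∫ y in Metric.ball (0 : EuclideanSpace ℝ (Fin n)) R, ‖gradient f y‖ ^ 2 := by
  obtain ⟨x₀, hx₀⟩ := hφc.exists_forall_ge_of_hasCompactSupport <|
    HasCompactSupport.intro (isCompact_closedBall 0 1) fun x hx =>
      Function.notMem_support.mp fun h => hx (hφsupp h)
  have hM := hφ0 x₀
  set κ := (volume (ball (0 : EuclideanSpace ℝ (Fin n)) 1)).toReal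
  refine ⟨4 * 2 ^ n * (φ x₀ * κ + 1), by positivity, fun R hR f hf => ?_⟩
  have key := setIntegral_ball_sq_abs_sub_setIntegral_mul_le (μ := volume) hf hR
    (ψ := fun z => (R ^ n)⁻¹ * φ (R⁻¹ • z)) (by fun_prop)
    (fun z => mul_nonneg (by positivity) (hφ0 _)) hM
    (fun z => by simpa using mul_le_mul_of_nonneg_left (hx₀ _) (by positivity))
    (by simpa [hφint] using setIntegral_ball_rescale_eq_integral (μ := volume) hφsupp hR)
  simpa only [finrank_euclideanSpace_fin, norm_gradient] using key

/-- Poincaré inequality with the mean value replaced by a weighted average against the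
rescaled cutoff `φ_R(y) = R^{-n} φ(y/R)`. -/
theorem poincare_weighted_average {n : ℕ} (hn : 1 ≤ n)
    (φ : EuclideanSpace ℝ (Fin n) → ℝ)
    (hφc : Continuous φ) (hφ0 : ∀ x, 0 ≤ φ x)
    (hφsupp : Function.support φ ⊆ Metric.closedBall 0 1)
    (hφint : ∫ x, φ x = 1) :
    ∃ C > 0, ∀ R > 0, ∀ f : EuclideanSpace ℝ (Fin n) → ℝ, ContDiff ℝ 1 f →
      (∫ y in Metric.ball (0 : EuclideanSpace ℝ (Fin n)) R,
          |f y - ∫ z in Metric.ball (0 : EuclideanSpace ℝ (Fin n)) R,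
              (R ^ n)⁻¹ * φ (R⁻¹ • z) * f z| ^ 2)
        ≤ C * R ^ 2 *
          ∫ y in Metric.ball (0 : EuclideanSpace ℝ (Fin n)) R, ‖gradient f y‖ ^ 2 :=
  poincare_weighted_average_general φ hφc hφ0 hφsupp hφint
end

section
/- Let Λ ≥ 1 and δ ≥ 0. Let g : ℝⁿ → Mₙ(ℝ) be a map such that for all x, y: g(x) is invertible, ‖g(x)‖ ≤ Λ, ‖g(x)⁻¹‖ ≤ Λ, and ‖g(x) - g(y)‖ ≤ δ·‖x - y‖. Let J : ℝⁿ → Mₙ(ℝ) be measurable with ‖J(y)‖ ≤ 1 for all y and J(y) + g(y)·J(y)ᵀ·g(y)⁻¹ = 0 for almost every y. Let φ : ℝⁿ → ℝ be continuous, nonnegative, supported in the closed unit ball with ∫φ = 1, and for ρ > 0 set J_ρ(x) = ∫ φ(z) J(x + ρz) dz. Then for every x, ‖J_ρ(x) + g(x)·J_ρ(x)ᵀ·g(x)⁻¹‖ ≤ (Λ + Λ³)·δ·ρ. -/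
open Matrix MeasureTheory
open scoped Matrix.Norms.L2Operator

/-!
The defect `M ↦ M + g x * Mᵀ * (g x)⁻¹` is linear, so it commutes with the average defining
`J_ρ x`, and it suffices to bound it at each `y = x + ρ • z` with `φ z ≠ 0`, where `‖x - y‖ ≤ ρ`.
There `J y` is `g y`-compatible, so the defect at `g x` only sees the change from `g y` to
`g x`: writing `J y = -(g y * (J y)ᵀ * (g y)⁻¹)` splits it into a term carrying `g x - g y` and
one carrying `(g x)⁻¹ - (g y)⁻¹ = (g x)⁻¹ * (g y - g x) * (g y)⁻¹`, of norms at most `Λ δ ρ` and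
`Λ³ δ ρ`. Averaging against the probability density `φ` keeps the bound.
-/

section WeightedAverage

variable {α E F : Type*} [MeasurableSpace α] {μ : Measure α}
  [NormedAddCommGroup E] [NormedSpace ℝ E] [NormedAddCommGroup F] [NormedSpace ℝ F]
  {φ : α → ℝ} {f : α → E} {C : ℝ}

theorem norm_integral_smul_le_of_ae_le (hφ : Integrable φ μ) (hφ0 : 0 ≤ᵐ[μ] φ)
    (hφ1 : ∫ a, φ a ∂μ = 1) (hf : ∀ᵐ a ∂μ, φ a ≠ 0 → ‖f a‖ ≤ C) :
    ‖∫ a, φ a • f a ∂μ‖ ≤ C := by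
  have hbound : ∀ᵐ a ∂μ, ‖φ a • f a‖ ≤ φ a * C := by
    filter_upwards [hφ0, hf] with a hφa hfa
    rcases eq_or_ne (φ a) 0 with h | h
    · simp [h]
    · rw [norm_smul, Real.norm_of_nonneg hφa]
      exact mul_le_mul_of_nonneg_left (hfa h) hφa
  calc ‖∫ a, φ a • f a ∂μ‖ ≤ ∫ a, φ a * C ∂μ := norm_integral_le_of_norm_le (hφ.mul_const C) hbound
    _ = C := by rw [integral_mul_const, hφ1, one_mul]

theorem norm_map_integral_smul_le_of_ae_le [CompleteSpace E] [CompleteSpace F] (L : E →L[ℝ] F)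
    (hφ : Integrable φ μ) (hφ0 : 0 ≤ᵐ[μ] φ) (hφ1 : ∫ a, φ a ∂μ = 1)
    (hφf : Integrable (fun a => φ a • f a) μ) (hf : ∀ᵐ a ∂μ, φ a ≠ 0 → ‖L (f a)‖ ≤ C) :
    ‖L (∫ a, φ a • f a ∂μ)‖ ≤ C := by
  rw [← L.integral_comp_comm hφf]
  simp only [map_smul]
  exact norm_integral_smul_le_of_ae_le hφ hφ0 hφ1 hf

end WeightedAverage

namespace Matrix

variable {m : Type*} [Fintype m] [DecidableEq m]

theorem l2_opNorm_transpose (M : Matrix m m ℝ) : ‖Mᵀ‖ = ‖M‖ := by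
  rw [← conjTranspose_eq_transpose_of_trivial, l2_opNorm_conjTranspose]

noncomputable def compatibilityDefect (A : Matrix m m ℝ) : Matrix m m ℝ →L[ℝ] Matrix m m ℝ :=
  LinearMap.toContinuousLinearMap
    { toFun := fun M => M + A * Mᵀ * A⁻¹
      map_add' := fun M N => by
        simp only [transpose_add, Matrix.mul_add, Matrix.add_mul]
        abel
      map_smul' := fun c M => by
        simp only [transpose_smul, Matrix.mul_smul, Matrix.smul_mul, RingHom.id_apply, smul_add] }

theorem compatibilityDefect_apply (A M : Matrix m m ℝ) :
    compatibilityDefect A M = M + A * Mᵀ * A⁻¹ := rfl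

theorem norm_compatibilityDefect_le {A B M : Matrix m m ℝ} {Λ : ℝ} (hA : IsUnit A)
    (hB : IsUnit B) (hBΛ : ‖B‖ ≤ Λ) (hAinv : ‖A⁻¹‖ ≤ Λ) (hBinv : ‖B⁻¹‖ ≤ Λ) (hM : ‖M‖ ≤ 1)
    (hBM : compatibilityDefect B M = 0) :
    ‖compatibilityDefect A M‖ ≤ (Λ + Λ ^ 3) * ‖A - B‖ := by
  have hΛ : 0 ≤ Λ := (norm_nonneg B).trans hBΛ
  have hMt : ‖Mᵀ‖ ≤ 1 := (l2_opNorm_transpose M).trans_le hM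
  have hsplit : compatibilityDefect A M =
      (A - B) * Mᵀ * A⁻¹ + B * Mᵀ * (A⁻¹ * (B - A) * B⁻¹) := by
    rw [compatibilityDefect_apply] at hBM ⊢
    rw [← inv_sub_inv (iff_of_true hA hB), ← sub_eq_zero, ← hBM]
    noncomm_ring
  rw [hsplit]
  calc _ ≤ ‖A - B‖ * ‖Mᵀ‖ * ‖A⁻¹‖ + ‖B‖ * ‖Mᵀ‖ * (‖A⁻¹‖ * ‖B - A‖ * ‖B⁻¹‖) :=
        norm_add_le_of_le norm_mul₃_le (norm_mul_le_of_le (norm_mul_le _ _) norm_mul₃_le)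
    _ ≤ ‖A - B‖ * 1 * Λ + Λ * 1 * (Λ * ‖A - B‖ * Λ) := by
        rw [norm_sub_rev B A]
        gcongr
    _ = (Λ + Λ ^ 3) * ‖A - B‖ := by ring

end Matrix

theorem mollified_almost_g_compatible_general {n : ℕ}
    (Λ δ : ℝ) (hδ : 0 ≤ δ)
    (g : (Fin n → ℝ) → Matrix (Fin n) (Fin n) ℝ)
    (hginv : ∀ x, IsUnit (g x))
    (hgΛ : ∀ x, ‖g x‖ ≤ Λ)
    (hginvΛ : ∀ x, ‖(g x)⁻¹‖ ≤ Λ)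
    (hglip : ∀ x y, ‖g x - g y‖ ≤ δ * ‖x - y‖)
    (J : (Fin n → ℝ) → Matrix (Fin n) (Fin n) ℝ)
    (hJmeas : ∀ i j : Fin n, Measurable fun y => J y i j)
    (hJbd : ∀ y, ‖J y‖ ≤ 1)
    (hJcompat : ∀ᵐ y : Fin n → ℝ, J y + g y * (J y)ᵀ * (g y)⁻¹ = 0)
    (φ : (Fin n → ℝ) → ℝ)
    (hφc : Continuous φ) (hφ0 : ∀ x, 0 ≤ φ x)
    (hφsupp : Function.support φ ⊆ Metric.closedBall 0 1)
    (hφint : ∫ x, φ x = 1)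
    (ρ : ℝ) (hρ : 0 < ρ) :
    ∀ x : Fin n → ℝ,
      ‖(∫ z : Fin n → ℝ, φ z • J (x + ρ • z)) +
          g x * (∫ z : Fin n → ℝ, φ z • J (x + ρ • z))ᵀ * (g x)⁻¹‖
        ≤ (Λ + Λ ^ 3) * δ * ρ := by
  intro x
  have hφi : Integrable φ := hφc.integrable_of_hasCompactSupport <|
    HasCompactSupport.intro (isCompact_closedBall 0 1) fun z hz =>
      Function.notMem_support.mp (mt (hφsupp ·) hz)
  have hshift : Measure.QuasiMeasurePreserving (fun z => x + ρ • z) volume volume :=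
    (measurePreserving_add_left volume x).quasiMeasurePreserving.comp
      (Measure.quasiMeasurePreserving_smul volume hρ.ne')
  have hJm : Measurable fun y i j => J y i j :=
    measurable_pi_lambda _ fun i => measurable_pi_lambda _ (hJmeas i)
  have hJi : Integrable fun z => φ z • J (x + ρ • z) :=
    hφi.smul_bdd 1 (hJm.comp hshift.measurable).aestronglyMeasurable (ae_of_all _ fun _ => hJbd _)
  refine norm_map_integral_smul_le_of_ae_le (compatibilityDefect (g x)) hφi (ae_of_all _ hφ0)
    hφint hJi ?_
  filter_upwards [hshift.ae hJcompat] with z hz hφz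
  have hΛ : 0 ≤ Λ := (norm_nonneg _).trans (hgΛ x)
  have hz1 : ‖z‖ ≤ 1 := by simpa using hφsupp hφz
  calc _ ≤ (Λ + Λ ^ 3) * ‖g x - g (x + ρ • z)‖ :=
        norm_compatibilityDefect_le (hginv _) (hginv _) (hgΛ _) (hginvΛ _) (hginvΛ _) (hJbd _) hz
    _ ≤ (Λ + Λ ^ 3) * (δ * (ρ * ‖z‖)) := by
        gcongr
        simpa [norm_smul, abs_of_pos hρ] using hglip x (x + ρ • z)
    _ ≤ (Λ + Λ ^ 3) * (δ * (ρ * 1)) := by gcongr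
    _ = (Λ + Λ ^ 3) * δ * ρ := by ring

/-- Local averages of a `g`-compatible field of matrices are almost `g`-compatible, with
error controlled by the modulus of continuity of `g` and the averaging radius `ρ`. -/
theorem mollified_almost_g_compatible {n : ℕ}
    (Λ δ : ℝ) (hΛ : 1 ≤ Λ) (hδ : 0 ≤ δ)
    (g : (Fin n → ℝ) → Matrix (Fin n) (Fin n) ℝ)
    (hginv : ∀ x, IsUnit (g x))
    (hgΛ : ∀ x, ‖g x‖ ≤ Λ)
    (hginvΛ : ∀ x, ‖(g x)⁻¹‖ ≤ Λ)
    (hglip : ∀ x y, ‖g x - g y‖ ≤ δ * ‖x - y‖)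
    (J : (Fin n → ℝ) → Matrix (Fin n) (Fin n) ℝ)
    (hJmeas : ∀ i j : Fin n, Measurable fun y => J y i j)
    (hJbd : ∀ y, ‖J y‖ ≤ 1)
    (hJcompat : ∀ᵐ y : Fin n → ℝ, J y + g y * (J y)ᵀ * (g y)⁻¹ = 0)
    (φ : (Fin n → ℝ) → ℝ)
    (hφc : Continuous φ) (hφ0 : ∀ x, 0 ≤ φ x)
    (hφsupp : Function.support φ ⊆ Metric.closedBall 0 1)
    (hφint : ∫ x, φ x = 1)
    (ρ : ℝ) (hρ : 0 < ρ) :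
    ∀ x : Fin n → ℝ,
      ‖(∫ z : Fin n → ℝ, φ z • J (x + ρ • z)) +
          g x * (∫ z : Fin n → ℝ, φ z • J (x + ρ • z))ᵀ * (g x)⁻¹‖
        ≤ (Λ + Λ ^ 3) * δ * ρ :=
  mollified_almost_g_compatible_general Λ δ hδ g hginv hgΛ hginvΛ hglip J hJmeas hJbd hJcompat φ hφc
    hφ0 hφsupp hφint ρ hρ
end
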